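/- For any positive parameters μ₁, μ₂, μ₃, the function g(x) = f(x) + (μ₂/μ₁)·f(2x) + (μ₃/μ₁)·f(π + x) has at least one and at most three zeros in (0, π). -/

import Mathlib

/-!
For `x ∈ (0, π)` the three arguments `x`, `2x`, `π + x` lie in `(0, 2π)`, where `sin (x / 2) > 0`,
`f` is smooth and `f''' > 0`. Hence `g''' > 0` on `(0, π)`, and three applications of Rolle's
theorem rule out four zeros. For existence, `f (π/3) = f (5π/3) = 0` kills the middle term of `g`
at `π/6` and at `5π/6`, and the signs of `f` at the other arguments give `g (π/6) < 0 < g (5π/6)`.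
-/

open Real Set

noncomputable def f (x : ℝ) : ℝ := Real.sin x * (1 - 1 / (8 * Real.sin (x/2)^3))

theorem exists_forall_mem_eq_or_eq_or_eq_of_strictMono {α : Type*} [LinearOrder α] [Nonempty α]
    {S : Set α} (hS : ∀ x : Fin 4 → α, StrictMono x → ∃ i, x i ∉ S) :
    ∃ a b c : α, ∀ x ∈ S, x = a ∨ x = b ∨ x = c := by
  by_contra! h
  obtain ⟨x₁, h₁, -⟩ := h (Classical.arbitrary α) (Classical.arbitrary α) (Classical.arbitrary α)
  obtain ⟨x₂, h₂, h₂₁, -⟩ := h x₁ x₁ x₁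
  obtain ⟨x₃, h₃, h₃₁, h₃₂, -⟩ := h x₁ x₂ x₂
  obtain ⟨x₄, h₄, h₄₁, h₄₂, h₄₃⟩ := h x₁ x₂ x₃
  set t : Finset α := {x₁, x₂, x₃, x₄}
  have ht : t.card = 4 := by
    simp [t, Finset.card_insert_of_notMem, h₂₁.symm, h₃₁.symm, h₃₂.symm, h₄₁.symm, h₄₂.symm,
      h₄₃.symm]
  obtain ⟨i, hi⟩ := hS _ (t.orderEmbOfFin ht).strictMono
  have hit := t.orderEmbOfFin_mem ht i
  simp only [t, Finset.mem_insert, Finset.mem_singleton] at hit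
  rcases hit with h | h | h | h <;> rw [h] at hi <;> contradiction

theorem exists_strictMono_deriv_eq_zero {I : Set ℝ} (hI : I.OrdConnected) {g g' : ℝ → ℝ}
    (hg : ∀ x ∈ I, HasDerivAt g (g' x) x) {n : ℕ} {x : Fin (n + 1) → ℝ} (hx : StrictMono x)
    (hxI : ∀ i, x i ∈ I) (hx₀ : ∀ i, g (x i) = 0) :
    ∃ y : Fin n → ℝ, StrictMono y ∧ (∀ i, y i ∈ I) ∧ ∀ i, g' (y i) = 0 := by
  have hsub (i : Fin n) : Icc (x i.castSucc) (x i.succ) ⊆ I := hI.out (hxI _) (hxI _)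
  have hrolle (i : Fin n) : ∃ c ∈ Ioo (x i.castSucc) (x i.succ), g' c = 0 :=
    exists_hasDerivAt_eq_zero (hx i.castSucc_lt_succ)
      (fun y hy => (hg y (hsub i hy)).continuousAt.continuousWithinAt) (by rw [hx₀, hx₀])
      (fun y hy => hg y (hsub i (Ioo_subset_Icc_self hy)))
  choose y hy hy₀ using hrolle
  refine ⟨y, fun i j hij => ?_, fun i => hsub i (Ioo_subset_Icc_self (hy i)), hy₀⟩
  calc y i < x i.succ := (hy i).2
    _ ≤ x j.castSucc := hx.monotone (Fin.succ_le_castSucc_iff.mpr hij)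
    _ < y j := (hy j).1

theorem exists_forall_zero_eq_or_eq_or_eq_of_deriv3_ne_zero {I : Set ℝ} (hI : I.OrdConnected)
    {g g' g'' g''' : ℝ → ℝ} (hg : ∀ x ∈ I, HasDerivAt g (g' x) x)
    (hg' : ∀ x ∈ I, HasDerivAt g' (g'' x) x) (hg'' : ∀ x ∈ I, HasDerivAt g'' (g''' x) x)
    (hg''' : ∀ x ∈ I, g''' x ≠ 0) :
    ∃ a b c : ℝ, ∀ x ∈ I, g x = 0 → x = a ∨ x = b ∨ x = c := by
  obtain ⟨a, b, c, h⟩ := exists_forall_mem_eq_or_eq_or_eq_of_strictMono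
    (S := {x ∈ I | g x = 0}) fun x hx => by
      by_contra! hzero
      obtain ⟨y₁, hy₁, hy₁I, hy₁₀⟩ := exists_strictMono_deriv_eq_zero hI hg hx
        (fun i => (hzero i).1) (fun i => (hzero i).2)
      obtain ⟨y₂, hy₂, hy₂I, hy₂₀⟩ := exists_strictMono_deriv_eq_zero hI hg' hy₁ hy₁I hy₁₀
      obtain ⟨y₃, -, hy₃I, hy₃₀⟩ := exists_strictMono_deriv_eq_zero hI hg'' hy₂ hy₂I hy₂₀
      exact hg''' _ (hy₃I 0) (hy₃₀ 0)
  exact ⟨a, b, c, fun x hx hx₀ => h x ⟨hx, hx₀⟩⟩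

theorem hasDerivAt_sin_half (x : ℝ) : HasDerivAt (fun y => sin (y / 2)) (cos (x / 2) / 2) x := by
  simpa [div_eq_mul_inv] using (hasDerivAt_id x |>.div_const 2).sin

theorem hasDerivAt_cos_half (x : ℝ) : HasDerivAt (fun y => cos (y / 2)) (-sin (x / 2) / 2) x := by
  simpa [div_eq_mul_inv] using (hasDerivAt_id x |>.div_const 2).cos

theorem sin_eq_two_mul_sin_half_mul_cos_half (x : ℝ) : sin x = 2 * sin (x / 2) * cos (x / 2) := by
  rw [← sin_two_mul, mul_div_cancel₀ x two_ne_zero]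

theorem cos_eq_one_sub_two_mul_sin_half_sq (x : ℝ) : cos x = 1 - 2 * sin (x / 2) ^ 2 := by
  have h := cos_two_mul' (x / 2)
  rw [mul_div_cancel₀ x two_ne_zero] at h
  linarith [sin_sq_add_cos_sq (x / 2)]

theorem sin_half_pos_of_mem_Ioo {x : ℝ} (hx : x ∈ Ioo 0 (2 * π)) : 0 < sin (x / 2) :=
  sin_pos_of_pos_of_lt_pi (by linarith [hx.1]) (by linarith [hx.2])

theorem sin_pi_div_twelve_lt : sin (π / 12) < 1 / 2 := by
  rw [← sin_pi_div_six]
  exact sin_lt_sin_of_lt_of_le_pi_div_two (by linarith [pi_pos]) (by linarith [pi_pos])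
    (by linarith [pi_pos])

theorem one_half_lt_sin_five_pi_div_twelve : 1 / 2 < sin (5 * π / 12) := by
  rw [← sin_pi_div_six]
  exact sin_lt_sin_of_lt_of_le_pi_div_two (by linarith [pi_pos]) (by linarith [pi_pos])
    (by linarith [pi_pos])

noncomputable def f' (x : ℝ) : ℝ := cos x + (2 - sin (x / 2) ^ 2) / (8 * sin (x / 2) ^ 3)

noncomputable def f'' (x : ℝ) : ℝ :=
  -sin x - cos (x / 2) * (6 - sin (x / 2) ^ 2) / (16 * sin (x / 2) ^ 4)

noncomputable def f''' (x : ℝ) : ℝ :=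
  -cos x + (24 - 20 * sin (x / 2) ^ 2 + sin (x / 2) ^ 4) / (32 * sin (x / 2) ^ 5)

theorem hasDerivAt_f {x : ℝ} (hx : sin (x / 2) ≠ 0) : HasDerivAt f (f' x) x := by
  have h := (hasDerivAt_sin x).fun_mul
    ((hasDerivAt_const x 1).fun_sub ((hasDerivAt_const x 1).fun_div
      (((hasDerivAt_sin_half x).fun_pow 3).const_mul 8) (by simp [hx])))
  refine h.congr_deriv ?_
  rw [f', sin_eq_two_mul_sin_half_mul_cos_half x, cos_eq_one_sub_two_mul_sin_half_sq x]
  field_simp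
  linear_combination 3 * sin (x / 2) ^ 2 * sin_sq_add_cos_sq (x / 2)

theorem hasDerivAt_f' {x : ℝ} (hx : sin (x / 2) ≠ 0) : HasDerivAt f' (f'' x) x := by
  have h := (hasDerivAt_cos x).fun_add
    (((hasDerivAt_const x 2).fun_sub ((hasDerivAt_sin_half x).fun_pow 2)).fun_div
      (((hasDerivAt_sin_half x).fun_pow 3).const_mul 8) (by simp [hx]))
  refine h.congr_deriv ?_
  rw [f'', sin_eq_two_mul_sin_half_mul_cos_half x]
  field_simp
  ring

theorem hasDerivAt_f'' {x : ℝ} (hx : sin (x / 2) ≠ 0) : HasDerivAt f'' (f''' x) x := by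
  have h := (hasDerivAt_sin x).fun_neg.fun_sub (((hasDerivAt_cos_half x).fun_mul
    ((hasDerivAt_const x 6).fun_sub ((hasDerivAt_sin_half x).fun_pow 2))).fun_div
      (((hasDerivAt_sin_half x).fun_pow 4).const_mul 16) (by simp [hx]))
  refine h.congr_deriv ?_
  rw [f''', cos_eq_one_sub_two_mul_sin_half_sq x]
  field_simp
  linear_combination (768 * sin (x / 2) ^ 3 - 64 * sin (x / 2) ^ 5) * sin_sq_add_cos_sq (x / 2)

theorem f'''_pos {x : ℝ} (hx : 0 < sin (x / 2)) : 0 < f''' x := by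
  have hs₁ : sin (x / 2) ≤ 1 := sin_le_one _
  rw [f''', cos_eq_one_sub_two_mul_sin_half_sq]
  generalize sin (x / 2) = s at hx hs₁ ⊢
  rw [show -(1 - 2 * s ^ 2) + (24 - 20 * s ^ 2 + s ^ 4) / (32 * s ^ 5)
      = (64 * s ^ 7 - 32 * s ^ 5 + s ^ 4 - 20 * s ^ 2 + 24) / (32 * s ^ 5) by field_simp; ring]
  refine div_pos ?_ (by positivity)
  nlinarith [pow_pos hx 5, pow_pos hx 4, mul_nonneg (sub_nonneg.2 hs₁) hx.le,
    mul_nonneg (mul_nonneg (sub_nonneg.2 hs₁) hx.le) (pow_pos hx 4).le, sq_nonneg (s ^ 2 - 1 / 3)]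

-- From `8 s³ - 1 = (2 s - 1) (4 s² + 2 s + 1)`: where `sin (x / 2) > 0`, `f x` has the sign of
-- `sin x * (2 sin (x / 2) - 1)`.
theorem f_eq_mul {x : ℝ} (hx : sin (x / 2) ≠ 0) :
    f x = sin x * (2 * sin (x / 2) - 1) *
      ((4 * sin (x / 2) ^ 2 + 2 * sin (x / 2) + 1) / (8 * sin (x / 2) ^ 3)) := by
  rw [f]
  field_simp
  ring

theorem f_pos {x : ℝ} (hx : 0 < sin (x / 2)) (h : 0 < sin x * (2 * sin (x / 2) - 1)) :
    0 < f x := by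
  rw [f_eq_mul hx.ne']
  exact mul_pos h (by positivity)

theorem f_neg {x : ℝ} (hx : 0 < sin (x / 2)) (h : sin x * (2 * sin (x / 2) - 1) < 0) :
    f x < 0 := by
  rw [f_eq_mul hx.ne']
  exact mul_neg_of_neg_of_pos h (by positivity)

theorem f_eq_zero {x : ℝ} (hx : sin (x / 2) = 1 / 2) : f x = 0 := by
  rw [f_eq_mul (by rw [hx]; norm_num), hx]
  norm_num

-- The factor `k` absorbs the chain rule on `φ (2 x)`: the `n`-th derivative of
-- `G a b 1 φ` is `G a b (2 ^ n) φ⁽ⁿ⁾`.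
noncomputable def G (a b k : ℝ) (φ : ℝ → ℝ) (x : ℝ) : ℝ :=
  φ x + a * (k * φ (2 * x)) + b * φ (π + x)

theorem hasDerivAt_G {φ φ' : ℝ → ℝ} (hφ : ∀ y ∈ Ioo 0 (2 * π), HasDerivAt φ (φ' y) y)
    (a b k : ℝ) : ∀ x ∈ Ioo 0 π, HasDerivAt (G a b k φ) (G a b (2 * k) φ' x) x := by
  rintro x ⟨hx₀, hxπ⟩
  have h₁ := hφ x ⟨hx₀, by linarith⟩
  have h₂ : HasDerivAt (fun y => φ (2 * y)) (φ' (2 * x) * 2) x := by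
    refine (hφ (2 * x) ⟨by linarith, by linarith⟩).comp x ?_
    simpa using (hasDerivAt_id x).const_mul (2 : ℝ)
  have h₃ := (hφ (π + x) ⟨by linarith, by linarith⟩).comp_const_add π x
  refine ((h₁.fun_add ((h₂.const_mul k).const_mul a)).fun_add (h₃.const_mul b)).congr_deriv ?_
  simp only [G]
  ring

theorem G_f'''_pos {a b k x : ℝ} (ha : 0 ≤ a) (hb : 0 ≤ b) (hk : 0 ≤ k) (hx : x ∈ Ioo 0 π) :
    0 < G a b k f''' x := by
  have hpos (y : ℝ) (hy : y ∈ Ioo 0 (2 * π)) := f'''_pos (sin_half_pos_of_mem_Ioo hy)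
  obtain ⟨hx₀, hxπ⟩ := hx
  have h₁ := hpos x ⟨hx₀, by linarith⟩
  have h₂ := hpos (2 * x) ⟨by linarith, by linarith⟩
  have h₃ := hpos (π + x) ⟨by linarith, by linarith⟩
  rw [G]
  positivity

theorem G_f_pi_div_six_neg (a : ℝ) {b : ℝ} (hb : 0 ≤ b) (k : ℝ) : G a b k f (π / 6) < 0 := by
  have h₁ : f (π / 6) < 0 := by
    have hs : sin (π / 6 / 2) = sin (π / 12) := by ring_nf
    refine f_neg (by rw [hs]; exact sin_pos_of_pos_of_lt_pi (by positivity) (by linarith [pi_pos]))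
      ?_
    rw [hs, sin_pi_div_six]
    linarith [sin_pi_div_twelve_lt]
  have h₂ : f (2 * (π / 6)) = 0 := f_eq_zero (by rw [← sin_pi_div_six]; ring_nf)
  have h₃ : f (π + π / 6) < 0 := by
    have hs : sin ((π + π / 6) / 2) = sin (5 * π / 12) := by
      rw [← sin_pi_sub]; ring_nf
    refine f_neg (by rw [hs]; linarith [one_half_lt_sin_five_pi_div_twelve]) ?_
    rw [hs, add_comm, sin_add_pi, sin_pi_div_six]
    linarith [one_half_lt_sin_five_pi_div_twelve]
  rw [G, h₂, mul_zero, mul_zero, add_zero]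
  nlinarith

theorem G_f_five_pi_div_six_pos (a : ℝ) {b : ℝ} (hb : 0 ≤ b) (k : ℝ) :
    0 < G a b k f (5 * π / 6) := by
  have hsin : sin (5 * π / 6) = 1 / 2 := by
    rw [← sin_pi_div_six, ← sin_pi_sub]; ring_nf
  have h₁ : 0 < f (5 * π / 6) := by
    have hs : sin (5 * π / 6 / 2) = sin (5 * π / 12) := by ring_nf
    refine f_pos (by rw [hs]; linarith [one_half_lt_sin_five_pi_div_twelve]) ?_
    rw [hs, hsin]
    linarith [one_half_lt_sin_five_pi_div_twelve]
  have h₂ : f (2 * (5 * π / 6)) = 0 := f_eq_zero (by rw [← hsin]; ring_nf)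
  have h₃ : 0 < f (π + 5 * π / 6) := by
    have hs : sin ((π + 5 * π / 6) / 2) = sin (π / 12) := by
      rw [← sin_pi_sub]; ring_nf
    refine f_pos (by rw [hs]; exact sin_pos_of_pos_of_lt_pi (by positivity) (by linarith [pi_pos]))
      ?_
    rw [hs, add_comm, sin_add_pi, hsin]
    linarith [sin_pi_div_twelve_lt]
  rw [G, h₂, mul_zero, mul_zero, add_zero]
  nlinarith

theorem exists_G_f_eq_zero (a : ℝ) {b : ℝ} (hb : 0 ≤ b) (k : ℝ) :
    ∃ x ∈ Ioo 0 π, G a b k f x = 0 :=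
  isPreconnected_Ioo.intermediate_value (a := π / 6) (b := 5 * π / 6)
    ⟨by linarith [pi_pos], by linarith [pi_pos]⟩ ⟨by linarith [pi_pos], by linarith [pi_pos]⟩
    (fun x hx => (hasDerivAt_G (fun y hy => hasDerivAt_f (sin_half_pos_of_mem_Ioo hy).ne')
      a b k x hx).continuousAt.continuousWithinAt)
    ⟨(G_f_pi_div_six_neg a hb k).le, (G_f_five_pi_div_six_pos a hb k).le⟩

theorem stmt14 (μ₁ μ₂ μ₃ : ℝ) (hμ1 : 0 < μ₁) (hμ2 : 0 < μ₂) (hμ3 : 0 < μ₃) :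
    let g : ℝ → ℝ := fun x => f x + (μ₂/μ₁) * f (2*x) + (μ₃/μ₁) * f (π + x)
    (∃ x ∈ Ioo (0:ℝ) π, g x = 0) ∧
    (∃ a b c : ℝ, ∀ x ∈ Ioo (0:ℝ) π, g x = 0 → x = a ∨ x = b ∨ x = c) := by
  intro g
  have hg : g = G (μ₂ / μ₁) (μ₃ / μ₁) 1 f := by
    funext x
    simp only [g, G, one_mul]
  have ha : 0 ≤ μ₂ / μ₁ := div_nonneg hμ2.le hμ1.le
  have hb : 0 ≤ μ₃ / μ₁ := div_nonneg hμ3.le hμ1.le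
  have hsin {y : ℝ} (hy : y ∈ Ioo 0 (2 * π)) : sin (y / 2) ≠ 0 := (sin_half_pos_of_mem_Ioo hy).ne'
  rw [hg]
  refine ⟨exists_G_f_eq_zero _ hb 1,
    exists_forall_zero_eq_or_eq_or_eq_of_deriv3_ne_zero ordConnected_Ioo
      (hasDerivAt_G (fun y hy => hasDerivAt_f (hsin hy)) _ _ 1)
      (hasDerivAt_G (fun y hy => hasDerivAt_f' (hsin hy)) _ _ (2 * 1))
      (hasDerivAt_G (fun y hy => hasDerivAt_f'' (hsin hy)) _ _ (2 * (2 * 1)))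
      fun x hx => (G_f'''_pos ha hb (by norm_num) hx).ne'⟩
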